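/- Let B, C⁻, C⁺ > 0 with C⁻ ≤ C⁺, let v ∈ L²(ℝ) with ‖v‖_{L²} ≤ B, let ξ : ℝ → ℝ be measurable with C⁻ ≤ ξ ≤ C⁺ a.e., and let u ∈ L²(ℝ) ∩ L^∞(ℝ). Set g(z) = min{1, e^{(C⁻/2)(B²/2 − |z|)}} with ‖g‖_{L¹} = B² + 4/C⁻. Define P(Y) = (1/2)∫_ℝ exp(−|∫_Y^{Y'} cos²(v(s)/2) ξ(s) ds|)·[u²(Y')cos²(v(Y')/2) + (1/2)sin²(v(Y')/2)]·ξ(Y') dY' and P_x(Y) = (1/2)(∫_Y^{+∞} − ∫_{−∞}^{Y}) of the same integrand. Then ‖P‖_{L²} ≤ (C⁺/2)·‖g‖_{L¹}·(‖u‖_{L^∞}‖u‖_{L²} + (1/4)‖v‖_{L²}) and ‖P_x‖_{L²} ≤ C⁺·‖g‖_{L¹}·(‖u‖_{L^∞}‖u‖_{L²} + (1/4)‖v‖_{L²}). -/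

import Mathlib

open MeasureTheory Real

noncomputable section

/-- `P(Y)` in the transferred coordinates (at a fixed time). -/
def Pop (v ξ u : ℝ → ℝ) (Y : ℝ) : ℝ :=
  (1 / 2) * ∫ Y' : ℝ,
    Real.exp (-|∫ s in Y..Y', Real.cos (v s / 2) ^ 2 * ξ s|)
      * (((u Y') ^ 2 * Real.cos (v Y' / 2) ^ 2
          + (1 / 2) * Real.sin (v Y' / 2) ^ 2) * ξ Y')

/-- `P_x(Y)` in the transferred coordinates (at a fixed time). -/
def Pxop (v ξ u : ℝ → ℝ) (Y : ℝ) : ℝ :=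
  (1 / 2) * ((∫ Y' in Set.Ioi Y,
      Real.exp (-|∫ s in Y..Y', Real.cos (v s / 2) ^ 2 * ξ s|)
        * (((u Y') ^ 2 * Real.cos (v Y' / 2) ^ 2
            + (1 / 2) * Real.sin (v Y' / 2) ^ 2) * ξ Y'))
    - ∫ Y' in Set.Iio Y,
      Real.exp (-|∫ s in Y..Y', Real.cos (v s / 2) ^ 2 * ξ s|)
        * (((u Y') ^ 2 * Real.cos (v Y' / 2) ^ 2
            + (1 / 2) * Real.sin (v Y' / 2) ^ 2) * ξ Y'))


open Set
open scoped ENNReal NNReal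

/-! Since `ξ ≥ C⁻` and `cos² (v/2) ≥ 1 - v²/4`, the exponent `∫_Y^{Y'} cos² (v/2) ξ` is at
least `C⁻ (|Y - Y'| - ‖v‖²_{L²}/4)`, so the kernel is dominated by the integrable profile
`g(Y - Y')`. The bracket times `ξ` is at most `C⁺ (‖u‖_{L^∞} |u| + |v|/4)`, an `L²` function.
Hence `|P|` and `|P_x|` are dominated pointwise by the convolution of `g` with that function, and
Young's inequality `‖g ⋆ f‖₂ ≤ ‖g‖₁ ‖f‖₂` (Cauchy–Schwarz against the weight `g`, then Tonelli)
concludes. -/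

theorem eLpNorm_two_sq_eq_lintegral {α ε : Type*} [MeasurableSpace α] [ENorm ε] (f : α → ε)
    (μ : Measure α) : eLpNorm f 2 μ ^ 2 = ∫⁻ x, ‖f x‖ₑ ^ 2 ∂μ := by
  simpa using eLpNorm_nnreal_pow_eq_lintegral (f := f) (μ := μ) (p := 2) two_ne_zero

theorem sq_lintegral_mul_le {α : Type*} [MeasurableSpace α] {μ : Measure α} {f g : α → ℝ≥0∞}
    (hf : AEMeasurable f μ) (hg : AEMeasurable g μ) :
    (∫⁻ a, f a * g a ∂μ) ^ 2 ≤ (∫⁻ a, f a ∂μ) * ∫⁻ a, f a * g a ^ 2 ∂μ := by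
  have hsplit (a : α) : f a ^ (2⁻¹ : ℝ) * (f a * g a ^ 2) ^ (2⁻¹ : ℝ) = f a * g a := by
    have hroot := ENNReal.pow_rpow_inv_natCast (n := 2) two_ne_zero (f a * g a)
    push_cast at hroot
    rw [← ENNReal.mul_rpow_of_nonneg _ _ (by norm_num), ← mul_assoc, ← sq, ← mul_pow, hroot]
  have holder := ENNReal.lintegral_mul_norm_pow_le hf (hf.mul (hg.pow_const 2))
    (p := 2⁻¹) (q := 2⁻¹) (by norm_num) (by norm_num) (by norm_num)
  simp only [Pi.mul_apply, hsplit] at holder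
  have hsq := ENNReal.rpow_inv_natCast_pow (n := 2) two_ne_zero
  push_cast at hsq
  calc (∫⁻ a, f a * g a ∂μ) ^ 2
      ≤ ((∫⁻ a, f a ∂μ) ^ (2⁻¹ : ℝ) * (∫⁻ a, f a * g a ^ 2 ∂μ) ^ (2⁻¹ : ℝ)) ^ 2 := by gcongr
    _ = (∫⁻ a, f a ∂μ) * ∫⁻ a, f a * g a ^ 2 ∂μ := by rw [mul_pow, hsq, hsq]

section Young

variable {G : Type*} [MeasurableSpace G] [AddCommGroup G] [MeasurableAdd₂ G] [MeasurableNeg G]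
  {μ : Measure G} [μ.IsAddLeftInvariant] {f g : G → ℝ≥0∞}

theorem lintegral_lconvolution [SFinite μ] (hf : AEMeasurable f μ) (hg : AEMeasurable g μ) :
    ∫⁻ x, (f ⋆ₗ[μ] g) x ∂μ = (∫⁻ y, f y ∂μ) * ∫⁻ y, g y ∂μ := by
  simp only [lconvolution_def]
  rw [lintegral_lintegral_swap (by fun_prop), ← lintegral_mul_const'' _ hf]
  refine lintegral_congr fun y => ?_
  have hgy : AEMeasurable (fun x => g (-y + x)) μ :=
    hg.comp_quasiMeasurePreserving (measurePreserving_add_left μ (-y)).quasiMeasurePreserving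
  rw [lintegral_const_mul'' _ hgy, lintegral_add_left_eq_self g (-y)]

theorem eLpNorm_lconvolution_le [SFinite μ] (hf : AEMeasurable f μ) (hg : AEMeasurable g μ) :
    eLpNorm (f ⋆ₗ[μ] g) 2 μ ≤ (∫⁻ y, f y ∂μ) * eLpNorm g 2 μ := by
  rw [← ENNReal.pow_le_pow_left_iff two_ne_zero, mul_pow, eLpNorm_two_sq_eq_lintegral,
    eLpNorm_two_sq_eq_lintegral]
  simp only [enorm_eq_self]
  have hg2 : AEMeasurable (fun y => g y ^ 2) μ := hg.pow_const 2
  calc ∫⁻ x, (f ⋆ₗ[μ] g) x ^ 2 ∂μ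
      ≤ ∫⁻ x, (∫⁻ y, f y ∂μ) * (f ⋆ₗ[μ] fun y => g y ^ 2) x ∂μ := by
        refine lintegral_mono fun x => ?_
        have hgx : AEMeasurable (fun y => g (-y + x)) μ := by
          simpa only [neg_add_eq_sub, Function.comp_def] using
            hg.comp_quasiMeasurePreserving (quasiMeasurePreserving_sub_left μ x)
        exact sq_lintegral_mul_le hf hgx
    _ = (∫⁻ y, f y ∂μ) ^ 2 * ∫⁻ y, g y ^ 2 ∂μ := by
        rw [lintegral_const_mul'' _ (aemeasurable_lconvolution hf hg2),
          lintegral_lconvolution hf hg2, ← mul_assoc, sq]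

theorem enorm_setIntegral_le_lconvolution [μ.IsNegInvariant] {E : Type*} [NormedAddCommGroup E]
    [NormedSpace ℝ E] {F : G → E} {x : G} (hF : ∀ᵐ y ∂μ, ‖F y‖ₑ ≤ f (x - y) * g y)
    (s : Set G) : ‖∫ y in s, F y ∂μ‖ₑ ≤ (f ⋆ₗ[μ] g) x := by
  rw [lconvolution_comm, lconvolution_def]
  calc ‖∫ y in s, F y ∂μ‖ₑ ≤ ∫⁻ y in s, ‖F y‖ₑ ∂μ := enorm_integral_le_lintegral_enorm _
    _ ≤ ∫⁻ y, ‖F y‖ₑ ∂μ := setLIntegral_le_lintegral _ _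
    _ ≤ ∫⁻ y, g y * f (-y + x) ∂μ :=
        lintegral_mono_ae (hF.mono fun y hy => by rwa [mul_comm, neg_add_eq_sub])

end Young

theorem eLpNorm_mul_abs_add_mul_abs_le {α : Type*} [MeasurableSpace α] {μ : Measure α}
    {p : ℝ≥0∞} (hp : 1 ≤ p) {f g : α → ℝ} (hf : AEStronglyMeasurable f μ)
    (hg : AEStronglyMeasurable g μ) (a b : ℝ) :
    eLpNorm (fun x => a * |f x| + b * |g x|) p μ
      ≤ ‖a‖ₑ * eLpNorm f p μ + ‖b‖ₑ * eLpNorm g p μ := by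
  calc _ ≤ eLpNorm (a • fun x => ‖f x‖) p μ + eLpNorm (b • fun x => ‖g x‖) p μ :=
        eLpNorm_add_le (hf.norm.const_smul a) (hg.norm.const_smul b) hp
    _ = _ := by rw [eLpNorm_const_smul, eLpNorm_const_smul, eLpNorm_norm, eLpNorm_norm]

theorem integral_sq_le_of_eLpNorm_le {α : Type*} [MeasurableSpace α] {μ : Measure α}
    {v : α → ℝ} {B : ℝ} (hv : MemLp v 2 μ) (hvB : eLpNorm v 2 μ ≤ ENNReal.ofReal B) :
    ∫ s, v s ^ 2 ∂μ ≤ B ^ 2 := by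
  rw [← ENNReal.ofReal_le_ofReal_iff (sq_nonneg B), ← sq_abs B, ENNReal.ofReal_pow (abs_nonneg B),
    ofReal_integral_eq_lintegral_ofReal hv.integrable_sq (.of_forall fun s => sq_nonneg _)]
  calc ∫⁻ s, ENNReal.ofReal (v s ^ 2) ∂μ = eLpNorm v 2 μ ^ 2 := by
        rw [eLpNorm_two_sq_eq_lintegral]
        refine lintegral_congr fun s => ?_
        rw [Real.enorm_eq_ofReal_abs, ← ENNReal.ofReal_pow (abs_nonneg _), sq_abs]
    _ ≤ ENNReal.ofReal |B| ^ 2 := by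
        gcongr
        exact hvB.trans (ENNReal.ofReal_le_ofReal (le_abs_self B))

theorem lintegral_comp_abs_le {ψ : ℝ → ℝ≥0∞} (hψ : Measurable ψ) :
    ∫⁻ z, ψ |z| ≤ 2 * ∫⁻ t in Ici 0, ψ t := by
  have hsplit (z : ℝ) : ψ |z| ≤ (Ici 0).indicator ψ z + (Ici 0).indicator ψ (-z) := by
    rcases le_total 0 z with hz | hz
    · rw [abs_of_nonneg hz, indicator_of_mem (mem_Ici.2 hz)]
      exact le_self_add
    · rw [abs_of_nonpos hz, indicator_of_mem (mem_Ici.2 (neg_nonneg.2 hz))]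
      exact le_add_self
  calc ∫⁻ z, ψ |z|
      ≤ ∫⁻ z, ((Ici 0).indicator ψ z + (Ici 0).indicator ψ (-z)) := lintegral_mono hsplit
    _ = 2 * ∫⁻ t in Ici 0, ψ t := by
      rw [lintegral_add_left (hψ.indicator measurableSet_Ici),
        lintegral_neg_eq_self ((Ici 0).indicator ψ), lintegral_indicator measurableSet_Ici,
        two_mul]

theorem lintegral_exp_mul_sub_Ioi {c : ℝ} (hc : 0 < c) (R : ℝ) :
    ∫⁻ t in Ioi R, ENNReal.ofReal (exp (c * (R - t))) = ENNReal.ofReal (1 / c) := by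
  have hfactor : (fun t => exp (c * (R - t))) = fun t => exp (c * R) * exp (-c * t) := by
    ext t
    rw [← exp_add]
    ring_nf
  have hint : IntegrableOn (fun t => exp (c * (R - t))) (Ioi R) := by
    rw [hfactor]
    exact (integrableOn_exp_mul_Ioi (neg_neg_of_pos hc) R).const_mul _
  rw [← ofReal_integral_eq_lintegral_ofReal hint (.of_forall fun t => (exp_pos _).le), hfactor,
    integral_const_mul, integral_exp_mul_Ioi (neg_neg_of_pos hc), neg_mul, mul_div_assoc',
    mul_neg, ← exp_add, add_neg_cancel, exp_zero]
  field_simp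

/-- The paper's `g` is `decayKernel (C⁻/2) (B²/2)`. -/
def decayKernel (c R z : ℝ) : ℝ := min 1 (exp (c * (R - |z|)))

theorem decayKernel_nonneg (c R z : ℝ) : 0 ≤ decayKernel c R z :=
  le_min zero_le_one (exp_pos _).le

theorem lintegral_decayKernel_le {c R : ℝ} (hc : 0 < c) (hR : 0 ≤ R) :
    ∫⁻ z, ENNReal.ofReal (decayKernel c R z) ≤ ENNReal.ofReal (2 * R + 2 / c) := by
  set ψ : ℝ → ℝ≥0∞ := fun t => ENNReal.ofReal (min 1 (exp (c * (R - t))))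
  have hψ : Measurable ψ := by fun_prop
  have hcore : ∫⁻ t in Icc 0 R, ψ t ≤ ENNReal.ofReal R := by
    calc ∫⁻ t in Icc 0 R, ψ t ≤ ∫⁻ _ in Icc 0 R, 1 :=
          lintegral_mono fun t => ENNReal.ofReal_le_one.2 (min_le_left _ _)
      _ = ENNReal.ofReal R := by simp
  have htail : ∫⁻ t in Ioi R, ψ t ≤ ENNReal.ofReal (1 / c) := by
    rw [← lintegral_exp_mul_sub_Ioi hc R]
    exact lintegral_mono fun t => ENNReal.ofReal_le_ofReal (min_le_right _ _)
  calc ∫⁻ z, ENNReal.ofReal (decayKernel c R z) = ∫⁻ z, ψ |z| := rfl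
    _ ≤ 2 * ∫⁻ t in Ici 0, ψ t := lintegral_comp_abs_le hψ
    _ ≤ 2 * ((∫⁻ t in Icc 0 R, ψ t) + ∫⁻ t in Ioi R, ψ t) := by
        rw [← Icc_union_Ioi_eq_Ici hR]
        gcongr 2 * ?_
        exact lintegral_union_le _ _ _
    _ ≤ 2 * (ENNReal.ofReal R + ENNReal.ofReal (1 / c)) := by
        gcongr 2 * ?_
        exact add_le_add hcore htail
    _ = ENNReal.ofReal (2 * R + 2 / c) := by
        rw [← ENNReal.ofReal_add hR (by positivity), ← ENNReal.ofReal_ofNat 2,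
          ← ENNReal.ofReal_mul zero_le_two]
        ring_nf

theorem one_sub_sq_div_four_le_cos_sq_half (x : ℝ) : 1 - x ^ 2 / 4 ≤ cos (x / 2) ^ 2 := by
  nlinarith [cos_sq_add_sin_sq (x / 2), sin_sq_le_sq (x := x / 2)]

theorem sin_sq_half_le_abs_div_two (y : ℝ) : sin (y / 2) ^ 2 ≤ |y| / 2 := by
  have habs : |sin (y / 2)| ≤ |y| / 2 := by
    simpa [abs_div] using abs_sin_le_abs (x := y / 2)
  nlinarith [abs_sin_le_one (y / 2), abs_nonneg (sin (y / 2)), sq_abs (sin (y / 2))]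

section KernelDecay

variable {v ξ : ℝ → ℝ} {Cm : ℝ}

theorem le_intervalIntegral_cos_sq_half_mul (hCm : 0 ≤ Cm) (hξ : ∀ᵐ s, Cm ≤ ξ s)
    (hv : Integrable (fun s => v s ^ 2)) {a b : ℝ} (hab : a ≤ b)
    (hint : IntervalIntegrable (fun s => cos (v s / 2) ^ 2 * ξ s) volume a b) :
    Cm * (b - a - (∫ s, v s ^ 2) / 4) ≤ ∫ s in a..b, cos (v s / 2) ^ 2 * ξ s := by
  have hv' : IntervalIntegrable (fun s => v s ^ 2 / 4) volume a b :=
    (hv.div_const 4).intervalIntegrable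
  have hlocal : ∫ s in a..b, v s ^ 2 / 4 ≤ (∫ s, v s ^ 2) / 4 := by
    rw [intervalIntegral.integral_of_le hab, ← integral_div]
    exact setIntegral_le_integral (hv.div_const 4) (.of_forall fun s => by positivity)
  calc Cm * (b - a - (∫ s, v s ^ 2) / 4) ≤ Cm * (b - a - ∫ s in a..b, v s ^ 2 / 4) := by
        gcongr
    _ = ∫ s in a..b, Cm * (1 - v s ^ 2 / 4) := by
        rw [intervalIntegral.integral_const_mul,
          intervalIntegral.integral_sub intervalIntegrable_const hv',
          intervalIntegral.integral_const, smul_eq_mul, mul_one]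
    _ ≤ ∫ s in a..b, cos (v s / 2) ^ 2 * ξ s := by
        refine intervalIntegral.integral_mono_ae_restrict hab
          ((intervalIntegrable_const.sub hv').const_mul Cm) hint ?_
        filter_upwards [ae_restrict_of_ae hξ] with s hs
        calc Cm * (1 - v s ^ 2 / 4) ≤ Cm * cos (v s / 2) ^ 2 :=
              mul_le_mul_of_nonneg_left (one_sub_sq_div_four_le_cos_sq_half _) hCm
          _ ≤ cos (v s / 2) ^ 2 * ξ s := by rw [mul_comm]; gcongr

theorem exp_neg_abs_integral_le_decayKernel (hCm : 0 ≤ Cm) (hξ : ∀ᵐ s, Cm ≤ ξ s)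
    (hv : Integrable (fun s => v s ^ 2)) {B : ℝ} (hvB : ∫ s, v s ^ 2 ≤ B ^ 2)
    (hint : ∀ a b, IntervalIntegrable (fun s => cos (v s / 2) ^ 2 * ξ s) volume a b)
    (Y Y' : ℝ) :
    exp (-|∫ s in Y..Y', cos (v s / 2) ^ 2 * ξ s|) ≤ decayKernel (Cm / 2) (B ^ 2 / 2) (Y - Y') := by
  have hlower : Cm * (|Y - Y'| - B ^ 2 / 4) ≤ |∫ s in Y..Y', cos (v s / 2) ^ 2 * ξ s| := by
    rcases le_total Y Y' with h | h
    · rw [abs_sub_comm, abs_of_nonneg (sub_nonneg.2 h)]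
      calc _ ≤ Cm * (Y' - Y - (∫ s, v s ^ 2) / 4) := by gcongr
        _ ≤ _ := (le_intervalIntegral_cos_sq_half_mul hCm hξ hv h (hint _ _)).trans
          (le_abs_self _)
    · rw [abs_of_nonneg (sub_nonneg.2 h), intervalIntegral.integral_symm, abs_neg]
      calc _ ≤ Cm * (Y - Y' - (∫ s, v s ^ 2) / 4) := by gcongr
        _ ≤ _ := (le_intervalIntegral_cos_sq_half_mul hCm hξ hv h (hint _ _)).trans
          (le_abs_self _)
  refine le_min (exp_le_one_iff.2 (neg_nonpos.2 (abs_nonneg _))) (exp_le_exp.2 ?_)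
  -- `C (d - B²/4) ≥ (C/2) (d - B²/2)` for `d = |Y - Y'| ≥ 0`
  nlinarith [abs_nonneg (Y - Y')]

end KernelDecay

theorem abs_source_le {x y ξ M Cp : ℝ} (hx : |x| ≤ M) (hξ0 : 0 ≤ ξ) (hξ : ξ ≤ Cp) :
    |(x ^ 2 * cos (y / 2) ^ 2 + 1 / 2 * sin (y / 2) ^ 2) * ξ| ≤ Cp * (M * |x| + 1 / 4 * |y|) := by
  have hcos : x ^ 2 * cos (y / 2) ^ 2 ≤ M * |x| := by
    nlinarith [cos_sq_le_one (y / 2), sq_abs x, abs_nonneg x, sq_nonneg x]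
  have hsin := sin_sq_half_le_abs_div_two y
  have hA : 0 ≤ x ^ 2 * cos (y / 2) ^ 2 + 1 / 2 * sin (y / 2) ^ 2 := by positivity
  rw [abs_of_nonneg (mul_nonneg hA hξ0)]
  nlinarith

def pIntegrand (v ξ u : ℝ → ℝ) (Y Y' : ℝ) : ℝ :=
  exp (-|∫ s in Y..Y', cos (v s / 2) ^ 2 * ξ s|)
    * ((u Y' ^ 2 * cos (v Y' / 2) ^ 2 + 1 / 2 * sin (v Y' / 2) ^ 2) * ξ Y')

section Integrand

variable {v ξ u : ℝ → ℝ}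

theorem enorm_pIntegrand_le {B Cm Cp M : ℝ} (hCm : 0 < Cm) (hv : MemLp v 2 volume)
    (hvB : eLpNorm v 2 volume ≤ ENNReal.ofReal B) (hξm : Measurable ξ)
    (hξ : ∀ᵐ s, ξ s ∈ Icc Cm Cp) (huM : ∀ᵐ y, |u y| ≤ M) (Y : ℝ) :
    ∀ᵐ Y', ‖pIntegrand v ξ u Y Y'‖ₑ
      ≤ ENNReal.ofReal (decayKernel (Cm / 2) (B ^ 2 / 2) (Y - Y'))
        * ‖Cp * (M * |u Y'| + 1 / 4 * |v Y'|)‖ₑ := by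
  have hint (a b : ℝ) : IntervalIntegrable (fun s => cos (v s / 2) ^ 2 * ξ s) volume a b := by
    have hvm : AEStronglyMeasurable v volume := hv.1
    refine (intervalIntegrable_const (c := Cp)).mono_fun'
      (by fun_prop : AEStronglyMeasurable _ volume).restrict ?_
    filter_upwards [ae_restrict_of_ae hξ] with s hs
    rw [norm_mul, norm_pow, Real.norm_eq_abs, Real.norm_eq_abs, sq_abs,
      abs_of_nonneg (hCm.le.trans hs.1)]
    nlinarith [cos_sq_le_one (v s / 2), hs.1, hs.2]
  have hkernel := exp_neg_abs_integral_le_decayKernel hCm.le (hξ.mono fun s hs => hs.1)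
    hv.integrable_sq (integral_sq_le_of_eLpNorm_le hv hvB) hint Y
  filter_upwards [huM, hξ] with Y' hu hξY'
  rw [← Real.enorm_eq_ofReal (decayKernel_nonneg _ _ _), ← enorm_mul, enorm_le_iff_norm_le,
    Real.norm_eq_abs, Real.norm_eq_abs, pIntegrand, abs_mul, abs_exp]
  exact (mul_le_mul (hkernel Y') (abs_source_le hu (hCm.le.trans hξY'.1) hξY'.2)
    (abs_nonneg _) (decayKernel_nonneg _ _ _)).trans (le_abs_self _)

theorem eLpNorm_source_bound_le {Cp : ℝ} (hCp : 0 ≤ Cp) (hu2 : MemLp u 2 volume)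
    (huI : MemLp u ∞ volume) (hv : AEStronglyMeasurable v volume) :
    eLpNorm (fun y => Cp * (lpNorm u ∞ volume * |u y| + 1 / 4 * |v y|)) 2 volume
      ≤ ENNReal.ofReal Cp * (eLpNorm u ∞ volume * eLpNorm u 2 volume
        + ENNReal.ofReal (1 / 4) * eLpNorm v 2 volume) := by
  rw [show (fun y => Cp * (lpNorm u ∞ volume * |u y| + 1 / 4 * |v y|))
    = Cp • fun y => lpNorm u ∞ volume * |u y| + 1 / 4 * |v y| from rfl, eLpNorm_const_smul,
    Real.enorm_eq_ofReal hCp]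
  gcongr
  refine (eLpNorm_mul_abs_add_mul_abs_le one_le_two hu2.1 hv _ _).trans_eq ?_
  rw [Real.enorm_eq_ofReal lpNorm_nonneg, ofReal_lpNorm huI, Real.enorm_eq_ofReal (by norm_num)]

variable {Y : ℝ} {T : ℝ≥0∞}

theorem enorm_Pop_le (hT : ∀ s, ‖∫ Y' in s, pIntegrand v ξ u Y Y'‖ₑ ≤ T) :
    ‖Pop v ξ u Y‖ₑ ≤ (2⁻¹ : ℝ≥0) * T := by
  rw [show Pop v ξ u Y = 1 / 2 * ∫ Y', pIntegrand v ξ u Y Y' from rfl, enorm_mul,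
    Real.enorm_eq_ofReal (by norm_num), ENNReal.coe_inv two_ne_zero, ENNReal.coe_ofNat,
    one_div, ENNReal.ofReal_inv_of_pos two_pos, ENNReal.ofReal_ofNat]
  gcongr
  simpa using hT univ

theorem enorm_Pxop_le (hT : ∀ s, ‖∫ Y' in s, pIntegrand v ξ u Y Y'‖ₑ ≤ T) :
    ‖Pxop v ξ u Y‖ₑ ≤ T := by
  rw [show Pxop v ξ u Y = 1 / 2 * ((∫ Y' in Ioi Y, pIntegrand v ξ u Y Y')
      - ∫ Y' in Iio Y, pIntegrand v ξ u Y Y') from rfl, enorm_mul,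
    Real.enorm_eq_ofReal (by norm_num), one_div, ENNReal.ofReal_inv_of_pos two_pos,
    ENNReal.ofReal_ofNat]
  calc 2⁻¹ * ‖(∫ Y' in Ioi Y, pIntegrand v ξ u Y Y') - ∫ Y' in Iio Y, pIntegrand v ξ u Y Y'‖ₑ
      ≤ 2⁻¹ * (T + T) := by
        gcongr
        exact enorm_sub_le.trans (add_le_add (hT _) (hT _))
    _ = T := by
        rw [← two_mul, ← mul_assoc, ENNReal.inv_mul_cancel two_ne_zero ENNReal.ofNat_ne_top,
          one_mul]

end Integrand

theorem stmt_12_general (B Cm Cp : ℝ) (hCm : 0 < Cm) (hCp : 0 < Cp)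
    (v ξ u : ℝ → ℝ)
    (hv : MemLp v 2 (volume : Measure ℝ))
    (hvB : eLpNorm v 2 (volume : Measure ℝ) ≤ ENNReal.ofReal B)
    (hξm : Measurable ξ) (hξ : ∀ᵐ Y : ℝ, ξ Y ∈ Set.Icc Cm Cp)
    (hu2 : MemLp u 2 (volume : Measure ℝ)) (huI : MemLp u ⊤ (volume : Measure ℝ)) :
    eLpNorm (Pop v ξ u) 2 (volume : Measure ℝ)
        ≤ ENNReal.ofReal ((Cp / 2) * (B ^ 2 + 4 / Cm))
            * (eLpNorm u ⊤ (volume : Measure ℝ) * eLpNorm u 2 (volume : Measure ℝ)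
              + ENNReal.ofReal (1 / 4) * eLpNorm v 2 (volume : Measure ℝ)) ∧
    eLpNorm (Pxop v ξ u) 2 (volume : Measure ℝ)
        ≤ ENNReal.ofReal (Cp * (B ^ 2 + 4 / Cm))
            * (eLpNorm u ⊤ (volume : Measure ℝ) * eLpNorm u 2 (volume : Measure ℝ)
              + ENNReal.ofReal (1 / 4) * eLpNorm v 2 (volume : Measure ℝ)) := by
  set X := eLpNorm u ⊤ volume * eLpNorm u 2 volume + ENNReal.ofReal (1 / 4) * eLpNorm v 2 volume
  set g : ℝ → ℝ≥0∞ := fun z => ENNReal.ofReal (decayKernel (Cm / 2) (B ^ 2 / 2) z)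
  set f : ℝ → ℝ≥0∞ := fun y => ‖Cp * (lpNorm u ∞ volume * |u y| + 1 / 4 * |v y|)‖ₑ
  have hconv (Y : ℝ) (s : Set ℝ) : ‖∫ Y' in s, pIntegrand v ξ u Y Y'‖ₑ ≤ (g ⋆ₗ f) Y :=
    enorm_setIntegral_le_lconvolution
      (enorm_pIntegrand_le hCm hv hvB hξm hξ (ae_le_lpNorm_exponent_top huI) Y) s
  have hg : ∫⁻ z, g z ≤ ENNReal.ofReal (B ^ 2 + 4 / Cm) := by
    convert lintegral_decayKernel_le (half_pos hCm) (by positivity : 0 ≤ B ^ 2 / 2) using 2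
    field_simp
    ring
  have hf : eLpNorm f 2 volume ≤ ENNReal.ofReal Cp * X :=
    (eLpNorm_enorm _).trans_le (eLpNorm_source_bound_le hCp.le hu2 huI hv.1)
  have hYoung : eLpNorm (g ⋆ₗ f) 2 volume ≤ ENNReal.ofReal (Cp * (B ^ 2 + 4 / Cm)) * X := by
    have hfm : AEMeasurable f volume :=
      (((hu2.1.norm.const_mul _).add (hv.1.norm.const_mul _)).const_mul Cp).enorm
    calc eLpNorm (g ⋆ₗ f) 2 volume ≤ (∫⁻ z, g z) * eLpNorm f 2 volume :=
          eLpNorm_lconvolution_le (by unfold g decayKernel; fun_prop) hfm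
      _ ≤ ENNReal.ofReal (B ^ 2 + 4 / Cm) * (ENNReal.ofReal Cp * X) := by gcongr
      _ = _ := by rw [ENNReal.ofReal_mul hCp.le]; ring
  refine ⟨?_, (eLpNorm_mono_enorm fun Y => enorm_Pxop_le (hconv Y)).trans hYoung⟩
  calc eLpNorm (Pop v ξ u) 2 volume ≤ (2⁻¹ : ℝ≥0) * eLpNorm (g ⋆ₗ f) 2 volume :=
        eLpNorm_le_mul_eLpNorm_of_ae_le_mul' (.of_forall fun Y => enorm_Pop_le (hconv Y)) 2
    _ ≤ 2⁻¹ * (ENNReal.ofReal (Cp * (B ^ 2 + 4 / Cm)) * X) := by gcongr; simp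
    _ = _ := by
        rw [div_mul_eq_mul_div, ENNReal.ofReal_div_of_pos two_pos, ENNReal.ofReal_ofNat,
          ENNReal.div_eq_inv_mul, mul_assoc]

/-- `L²` bounds for `P` and `P_x`: with `‖g‖_{L¹} = B² + 4/C⁻`,
`‖P‖_{L²} ≤ (C⁺/2) ‖g‖_{L¹} (‖u‖_{L^∞} ‖u‖_{L²} + (1/4) ‖v‖_{L²})` and
`‖P_x‖_{L²} ≤ C⁺ ‖g‖_{L¹} (‖u‖_{L^∞} ‖u‖_{L²} + (1/4) ‖v‖_{L²})`. -/
theorem stmt_12 (B Cm Cp : ℝ) (hB : 0 < B) (hCm : 0 < Cm) (hCp : 0 < Cp) (hle : Cm ≤ Cp)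
    (v ξ u : ℝ → ℝ)
    (hv : MemLp v 2 (volume : Measure ℝ))
    (hvB : eLpNorm v 2 (volume : Measure ℝ) ≤ ENNReal.ofReal B)
    (hξm : Measurable ξ) (hξ : ∀ᵐ Y : ℝ, ξ Y ∈ Set.Icc Cm Cp)
    (hu2 : MemLp u 2 (volume : Measure ℝ)) (huI : MemLp u ⊤ (volume : Measure ℝ)) :
    eLpNorm (Pop v ξ u) 2 (volume : Measure ℝ)
        ≤ ENNReal.ofReal ((Cp / 2) * (B ^ 2 + 4 / Cm))
            * (eLpNorm u ⊤ (volume : Measure ℝ) * eLpNorm u 2 (volume : Measure ℝ)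
              + ENNReal.ofReal (1 / 4) * eLpNorm v 2 (volume : Measure ℝ)) ∧
    eLpNorm (Pxop v ξ u) 2 (volume : Measure ℝ)
        ≤ ENNReal.ofReal (Cp * (B ^ 2 + 4 / Cm))
            * (eLpNorm u ⊤ (volume : Measure ℝ) * eLpNorm u 2 (volume : Measure ℝ)
              + ENNReal.ofReal (1 / 4) * eLpNorm v 2 (volume : Measure ℝ)) :=
  stmt_12_general B Cm Cp hCm hCp v ξ u hv hvB hξm hξ hu2 huI
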